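/- arXiv:2601.08989 — 2 statements merged into one kernel-verified Lean document; each statement's English description precedes it below -/
import Mathlib

section
/- If m, n ≥ 2 and at least one of m and n is even, then G(m,n) equals the full symmetric group on Fin m × Fin n, i.e., every permutation of the m·n positions can be realized by a sequence of unit row and column rotations. -/
/-!
The commutator of the row rotation `ρ_i` and the column rotation `γ_j` is the 3-cycle
`(i, j) ↦ (i, j + 1) ↦ (i + 1, j) ↦ (i, j)`, so `⁅ρ_i, γ_j⁆ ρ_i` is the
transposition of `(i, j)` and `(i + 1, j)` times a disjoint `(n - 1)`-cycle on row `i`.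
When `n` is even, `n - 1` is odd and the `(n - 1)`-st power of this element is that
transposition. With `γ_j` it generates all permutations of column `j`, and conjugating by
powers of row rotations then produces every transposition of the board. Transposing the
board exchanges `m` and `n`.
-/

/-- Unit rightward rotation of row `i` of the `m × n` Torus Puzzle. -/
def rowRot (m n : ℕ) (i : Fin m) : Equiv.Perm (Fin m × Fin n) where
  toFun p := if p.1 = i then (i, finRotate n p.2) else p
  invFun p := if p.1 = i then (i, (finRotate n).symm p.2) else p
  left_inv := by rintro ⟨a, b⟩; by_cases h : a = i <;> simp [h, -finRotate_apply, -finRotate_symm_apply]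
  right_inv := by rintro ⟨a, b⟩; by_cases h : a = i <;> simp [h, -finRotate_apply, -finRotate_symm_apply]

/-- Unit downward rotation of column `j` of the `m × n` Torus Puzzle. -/
def colRot (m n : ℕ) (j : Fin n) : Equiv.Perm (Fin m × Fin n) where
  toFun p := if p.2 = j then (finRotate m p.1, j) else p
  invFun p := if p.2 = j then ((finRotate m).symm p.1, j) else p
  left_inv := by rintro ⟨a, b⟩; by_cases h : b = j <;> simp [h, -finRotate_apply, -finRotate_symm_apply]
  right_inv := by rintro ⟨a, b⟩; by_cases h : b = j <;> simp [h, -finRotate_apply, -finRotate_symm_apply]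

/-- The set `S(m,n)` of the `m + n` unit rotations. -/
def unitRotations (m n : ℕ) : Set (Equiv.Perm (Fin m × Fin n)) :=
  Set.range (rowRot m n) ∪ Set.range (colRot m n)

/-- The group `G(m,n)` generated by the unit rotations. -/
def torusGroup (m n : ℕ) : Subgroup (Equiv.Perm (Fin m × Fin n)) :=
  Subgroup.closure (unitRotations m n)

open Equiv Equiv.Perm Subgroup Finset
open scoped commutatorElement

namespace Equiv.Perm

variable {α β : Type*}

def prodExtendRightHom [DecidableEq α] (a : α) : Perm β →* Perm (α × β) where
  toFun := prodExtendRight a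
  map_one' := by ext ⟨x, y⟩ <;> by_cases h : x = a <;> simp [prodExtendRight, h]
  map_mul' σ τ := by ext ⟨x, y⟩ <;> by_cases h : x = a <;> simp [prodExtendRight, h]

@[simp]
theorem prodExtendRightHom_apply [DecidableEq α] (a : α) (σ : Perm β) :
    prodExtendRightHom a σ = prodExtendRight a σ :=
  rfl

def prodExtendLeftHom [DecidableEq β] (b : β) : Perm α →* Perm (α × β) :=
  (prodComm β α).permCongrHom.toMonoidHom.comp (prodExtendRightHom b)

theorem prodExtendLeftHom_apply [DecidableEq β] (b : β) (σ : Perm α) (x : α) (y : β) :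
    prodExtendLeftHom b σ (x, y) = if y = b then (σ x, b) else (x, y) := by
  by_cases h : y = b <;> simp [prodExtendLeftHom, prodExtendRight, permCongr_apply, h]

theorem prodExtendRight_swap [DecidableEq α] [DecidableEq β] (a : α) (b c : β) :
    prodExtendRight a (swap b c) = swap (a, b) (a, c) := by
  ext1 ⟨x, y⟩
  by_cases hx : x = a
  · subst hx
    rw [prodExtendRight_apply_eq]
    exact (Prod.mk_right_injective x).map_swap b c y
  · rw [prodExtendRight_apply_ne _ hx, swap_apply_of_ne_of_ne] <;> simp [hx]

theorem prodExtendLeftHom_swap [DecidableEq α] [DecidableEq β] (b : β) (x y : α) :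
    prodExtendLeftHom b (swap x y) = swap (x, b) (y, b) := by
  rw [prodExtendLeftHom, MonoidHom.comp_apply, prodExtendRightHom_apply, prodExtendRight_swap]
  exact symm_trans_swap_trans _ _ _

theorem IsCycle.swap_mul_pow_card_support_sub_one [DecidableEq α] [Fintype α] {f : Perm α}
    (hf : IsCycle f) {x : α} (hx : f x ≠ x) : (swap x (f x) * f) ^ (#f.support - 1) = 1 := by
  by_cases hffx : f (f x) = x
  · rw [hf.eq_swap_of_apply_apply_eq_self hx hffx, card_support_swap hx.symm]
    simp
  · have hcard : #(swap x (f x) * f).support = #f.support - 1 := by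
      rw [support_swap_mul_eq f x hffx, sdiff_singleton_eq_erase,
        card_erase_of_mem (mem_support.2 hx)]
    rw [← hcard, ← (hf.swap_mul hx hffx).orderOf, pow_orderOf_eq_one]

theorem swap_apply_apply_mem [DecidableEq α] {H : Subgroup (Perm α)} {g : Perm α} (hg : g ∈ H)
    {x y : α} (h : swap x y ∈ H) : swap (g x) (g y) ∈ H := by
  rw [swap_apply_apply]
  exact mul_mem (mul_mem hg h) (inv_mem hg)

end Equiv.Perm

theorem finRotate_apply_ne_self {n : ℕ} (hn : 2 ≤ n) (x : Fin n) : finRotate n x ≠ x := by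
  rw [← mem_support, support_finRotate_of_le hn]
  exact mem_univ x

theorem swap_mul_finRotate_pow_sub_one {n : ℕ} (hn : 2 ≤ n) (j : Fin n) :
    (swap j (finRotate n j) * finRotate n) ^ (n - 1) = 1 := by
  have := (isCycle_finRotate_of_le hn).swap_mul_pow_card_support_sub_one
    (finRotate_apply_ne_self hn j)
  rwa [support_finRotate_of_le hn, card_univ, Fintype.card_fin] at this

section Torus

variable {m n : ℕ}

theorem rowRot_eq (i : Fin m) : rowRot m n i = prodExtendRightHom i (finRotate n) := rfl

theorem colRot_eq (j : Fin n) : colRot m n j = prodExtendLeftHom j (finRotate m) := by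
  ext ⟨x, y⟩ <;> simp [prodExtendLeftHom_apply, colRot]

@[simp]
theorem rowRot_apply_self (i : Fin m) (y : Fin n) : rowRot m n i (i, y) = (i, finRotate n y) :=
  if_pos rfl

theorem rowRot_apply_of_ne {i x : Fin m} (h : x ≠ i) (y : Fin n) : rowRot m n i (x, y) = (x, y) :=
  if_neg h

@[simp]
theorem colRot_apply_self (j : Fin n) (x : Fin m) : colRot m n j (x, j) = (finRotate m x, j) :=
  if_pos rfl

theorem colRot_apply_of_ne {j y : Fin n} (h : y ≠ j) (x : Fin m) : colRot m n j (x, y) = (x, y) :=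
  if_neg h

theorem rowRot_mem_torusGroup (i : Fin m) : rowRot m n i ∈ torusGroup m n :=
  subset_closure (Or.inl ⟨i, rfl⟩)

theorem colRot_mem_torusGroup (j : Fin n) : colRot m n j ∈ torusGroup m n :=
  subset_closure (Or.inr ⟨j, rfl⟩)

theorem permCongrHom_prodComm_rowRot (i : Fin m) :
    (prodComm (Fin m) (Fin n)).permCongrHom (rowRot m n i) = colRot n m i := by
  rw [rowRot_eq, colRot_eq]
  rfl

theorem permCongrHom_prodComm_colRot (j : Fin n) :
    (prodComm (Fin m) (Fin n)).permCongrHom (colRot m n j) = rowRot n m j := by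
  rw [← permCongrHom_prodComm_rowRot, ← prodComm_symm, ← permCongrHom_symm,
    MulEquiv.symm_apply_apply]

theorem torusGroup_map_prodComm :
    (torusGroup m n).map (prodComm (Fin m) (Fin n)).permCongrHom.toMonoidHom = torusGroup n m := by
  rw [torusGroup, torusGroup, MonoidHom.map_closure, unitRotations, unitRotations,
    Set.image_union, ← Set.range_comp, ← Set.range_comp, Set.union_comm]
  congr 3 <;> funext k
  · exact permCongrHom_prodComm_colRot k
  · exact permCongrHom_prodComm_rowRot k

theorem commutatorElement_rowRot_colRot (hm : 2 ≤ m) (hn : 2 ≤ n) (i : Fin m) (j : Fin n) :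
    ⁅rowRot m n i, colRot m n j⁆ =
      swap (i, j) (finRotate m i, j) * swap (i, j) (i, finRotate n j) := by
  have hfm := finRotate_apply_ne_self hm
  have hfn := finRotate_apply_ne_self hn
  rw [commutatorElement_def, mul_inv_eq_iff_eq_mul, mul_inv_eq_iff_eq_mul]
  ext1 ⟨x, y⟩
  simp only [Perm.mul_apply]
  rcases eq_or_ne y j with hy | hy <;> rcases eq_or_ne x i with hx | hx <;>
    rcases eq_or_ne (finRotate m x) i with hxi | hxi <;>
    rcases eq_or_ne (finRotate n y) j with hyj | hyj <;>
    simp [*, rowRot_apply_of_ne, colRot_apply_of_ne, swap_apply_of_ne_of_ne, (hfm _).symm,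
      (hfn _).symm, -finRotate_apply]

theorem swap_finRotate_mem_torusGroup (hm : 2 ≤ m) (hn : 2 ≤ n) (hn_even : Even n)
    (i : Fin m) (j : Fin n) : swap (i, j) (finRotate m i, j) ∈ torusGroup m n := by
  set s := swap (i, j) (finRotate m i, j)
  set σ := swap j (finRotate n j) * finRotate n
  have hdisj : Disjoint s (prodExtendRightHom i σ) := by
    rintro ⟨x, y⟩
    by_cases hx : x = i
    · subst hx
      by_cases hy : y = j
      · subst hy
        right
        simp [σ, -finRotate_apply]
      · left
        exact swap_apply_of_ne_of_ne (by simp [hy]) (by simp [hy])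
    · right
      exact prodExtendRight_apply_ne _ hx _
  have hu : ⁅rowRot m n i, colRot m n j⁆ * rowRot m n i = s * prodExtendRightHom i σ := by
    rw [commutatorElement_rowRot_colRot hm hn, rowRot_eq, mul_assoc, ← prodExtendRight_swap,
      ← prodExtendRightHom_apply, ← map_mul]
  obtain ⟨k, hk⟩ : Odd (n - 1) := Nat.Even.sub_odd (by omega) hn_even odd_one
  have hs : s ^ (n - 1) = s := by
    rw [hk, pow_succ, pow_mul, sq, swap_mul_self, one_pow, one_mul]
  have hpow : (s * prodExtendRightHom i σ) ^ (n - 1) = s := by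
    rw [hdisj.commute.mul_pow, ← map_pow, swap_mul_finRotate_pow_sub_one hn, map_one, mul_one, hs]
  rw [← hpow, ← hu, commutatorElement_def]
  have hρ := rowRot_mem_torusGroup (n := n) i
  have hγ := colRot_mem_torusGroup (m := m) j
  exact pow_mem (mul_mem (mul_mem (mul_mem (mul_mem hρ hγ) (inv_mem hρ)) (inv_mem hγ)) hρ) _

theorem swap_mem_torusGroup_of_snd_eq (hm : 2 ≤ m) (hn : 2 ≤ n) (hn_even : Even n)
    (x x' : Fin m) (y : Fin n) : swap (x, y) (x', y) ∈ torusGroup m n := by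
  have hcol : (torusGroup m n).comap (prodExtendLeftHom y) = ⊤ := by
    let x₀ : Fin m := ⟨0, by omega⟩
    rw [eq_top_iff, ← closure_cycle_adjacent_swap (isCycle_finRotate_of_le hm)
      (support_finRotate_of_le hm) x₀, closure_le, Set.insert_subset_iff,
      Set.singleton_subset_iff]
    refine ⟨?_, ?_⟩
    · rw [SetLike.mem_coe, mem_comap, ← colRot_eq]
      exact colRot_mem_torusGroup y
    · rw [SetLike.mem_coe, mem_comap, prodExtendLeftHom_swap]
      exact swap_finRotate_mem_torusGroup hm hn hn_even x₀ y
  rw [← prodExtendLeftHom_swap, ← mem_comap, hcol]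
  exact mem_top _

theorem swap_mem_torusGroup_of_fst_ne (hm : 2 ≤ m) (hn : 2 ≤ n) (hn_even : Even n)
    {x x' : Fin m} (hx : x ≠ x') (y y' : Fin n) : swap (x, y) (x', y') ∈ torusGroup m n := by
  obtain ⟨k, hk⟩ := (isCycle_finRotate_of_le hn).exists_pow_eq
    (finRotate_apply_ne_self hn y) (finRotate_apply_ne_self hn y')
  have hg : rowRot m n x' ^ k ∈ torusGroup m n := pow_mem (rowRot_mem_torusGroup x') k
  have := swap_apply_apply_mem hg (swap_mem_torusGroup_of_snd_eq hm hn hn_even x x' y)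
  rwa [rowRot_eq, ← map_pow, prodExtendRightHom_apply, prodExtendRight_apply_ne _ hx,
    prodExtendRight_apply_eq, hk] at this

theorem swap_mem_torusGroup (hm : 2 ≤ m) (hn : 2 ≤ n) (hn_even : Even n)
    (p q : Fin m × Fin n) : swap p q ∈ torusGroup m n := by
  obtain ⟨x, y⟩ := p
  obtain ⟨x', y'⟩ := q
  rcases ne_or_eq x x' with hx | rfl
  · exact swap_mem_torusGroup_of_fst_ne hm hn hn_even hx y y'
  · have hx := (finRotate_apply_ne_self hm x).symm
    exact SubmonoidClass.swap_mem_trans _ (swap_mem_torusGroup_of_fst_ne hm hn hn_even hx y y')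
      (swap_mem_torusGroup_of_fst_ne hm hn hn_even hx.symm y' y')

theorem torusGroup_eq_top_of_even_right (hm : 2 ≤ m) (hn : 2 ≤ n) (hn_even : Even n) :
    torusGroup m n = ⊤ := by
  rw [eq_top_iff, ← closure_isSwap, closure_le]
  rintro _ ⟨p, q, -, rfl⟩
  exact swap_mem_torusGroup hm hn hn_even p q

end Torus

/-- When at least one of ,  is even, `G(m,n)` is the full symmetric group. -/
theorem torusGroup_eq_top_of_even (m n : ℕ)
    (hm : 2 ≤ m) (hn : 2 ≤ n) (h : Even m ∨ Even n) :
    torusGroup m n = ⊤ := by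
  rcases h with hm_even | hn_even
  · rw [← torusGroup_map_prodComm, torusGroup_eq_top_of_even_right hn hm hm_even]
    exact map_top_of_surjective _ (MulEquiv.surjective _)
  · exact torusGroup_eq_top_of_even_right hm hn hn_even
end

section
/- There exists a constant C > 0 such that for all integers m, n ≥ 2 and every configuration A of the m × n Torus Puzzle in which every column is near-full, there is a finite sequence of at most C · m · n unit rotations whose application to A produces a configuration in which every column is body-full. -/
/- Applying a unit rotation g to a configuration A yields A ∘ g⁻¹. -/
def applyRot {m n : ℕ} (A : (Fin m × Fin n) ≃ Fin (m * n))
    (g : Equiv.Perm (Fin m × Fin n)) : (Fin m × Fin n) ≃ Fin (m * n) :=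
  g.symm.trans A

/- Applying a finite sequence of rotations, one after another (left to right). -/
def applySeq {m n : ℕ} (A : (Fin m × Fin n) ≃ Fin (m * n))
    (L : List (Equiv.Perm (Fin m × Fin n))) : (Fin m × Fin n) ≃ Fin (m * n) :=
  L.foldl applyRot A

/- Column j is near-full: every element in the body of column j has target column j. -/
def NearFull {m n : ℕ} (A : (Fin m × Fin n) ≃ Fin (m * n)) (j : Fin n) : Prop :=
  ∀ i : Fin m, 1 ≤ (i : ℕ) → (A (i, j) : ℕ) % n = (j : ℕ)

/- The body of column j contains exactly the elements with target column j and target row ≥ 1. -/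
def BodyOfColumnIsFull {m n : ℕ} (A : (Fin m × Fin n) ≃ Fin (m * n)) (j : Fin n) : Prop :=
  ∀ v : Fin (m * n),
    (∃ i : Fin m, 1 ≤ (i : ℕ) ∧ A (i, j) = v) ↔ ((v : ℕ) % n = (j : ℕ) ∧ 1 ≤ (v : ℕ) / n)

/- Column j is body-sorted: every element of the body of column j is in its target position. -/
def BodySorted {m n : ℕ} (A : (Fin m × Fin n) ≃ Fin (m * n)) (j : Fin n) : Prop :=
  ∀ i : Fin m, 1 ≤ (i : ℕ) → (A (i, j) : ℕ) = (i : ℕ) * n + (j : ℕ)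

/- Column j is body-full: near-full, and moreover its body contains exactly the
elements with target column j and target row at least 1. -/
def BodyFull {m n : ℕ} (A : (Fin m × Fin n) ≃ Fin (m * n)) (j : Fin n) : Prop :=
  NearFull A j ∧ BodyOfColumnIsFull A j

/-! In a near-full configuration the body of column `j` holds `m - 1` of the `m` elements with
target column `j`, so exactly one of them is missing. If the missing one is the top element `j`,
the column is body-full. Otherwise `j` lies in the body and the missing element is a stray that
can only sit in the top row. Each rotation of the top row moves every stray one column to the
right, so within `n - 1` row rotations every stray reaches the top cell of its own column; then at
most `m` rotations of that column bring `j` to the top and the stray into the body. In total this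
takes at most `n + m * n ≤ 2 * m * n` moves. -/

open Fin.NatCast Fin.CommRing

variable {m n : ℕ}

lemma applySeq_append (A : (Fin m × Fin n) ≃ Fin (m * n))
    (L₁ L₂ : List (Equiv.Perm (Fin m × Fin n))) :
    applySeq A (L₁ ++ L₂) = applySeq (applySeq A L₁) L₂ :=
  List.foldl_append

lemma applySeq_replicate_apply (A : (Fin m × Fin n) ≃ Fin (m * n))
    (g : Equiv.Perm (Fin m × Fin n)) (k : ℕ) (p : Fin m × Fin n) :
    applySeq A (List.replicate k g) p = A ((g ^ k).symm p) := by
  induction k generalizing A with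
  | zero => rfl
  | succ k ih =>
    rw [List.replicate_succ, applySeq, List.foldl_cons, ← applySeq, ih, pow_succ]
    rfl

lemma colRot_apply [NeZero m] (j : Fin n) (i : Fin m) (c : Fin n) :
    colRot m n j (i, c) = if c = j then (i + 1, j) else (i, c) := by
  simp [colRot]

lemma colRot_pow_apply [NeZero m] (j : Fin n) (k : ℕ) (i : Fin m) (c : Fin n) :
    (colRot m n j ^ k) (i, c) = if c = j then (i + k, j) else (i, c) := by
  induction k with
  | zero => split_ifs with h <;> simp [h]
  | succ k ih =>
    rw [pow_succ', Equiv.Perm.mul_apply, ih]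
    split_ifs with h <;> simp [colRot_apply, h, add_assoc]

lemma applySeq_colRot_shift [NeZero m] (A : (Fin m × Fin n) ≃ Fin (m * n)) (j : Fin n)
    (i₀ i : Fin m) (c : Fin n) :
    applySeq A (List.replicate (m - i₀) (colRot m n j)) (i, c) =
      if c = j then A (i + i₀, j) else A (i, c) := by
  rw [applySeq_replicate_apply]
  split_ifs with h
  · subst h
    congr 1
    rw [Equiv.symm_apply_eq, colRot_pow_apply, if_pos rfl, Nat.cast_sub i₀.is_lt.le,
      Fin.natCast_self, Fin.cast_val_eq_self]
    simp
  · congr 1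
    rw [Equiv.symm_apply_eq, colRot_pow_apply, if_neg h]

lemma applyRot_rowRot_zero_apply [NeZero m] [NeZero n] (A : (Fin m × Fin n) ≃ Fin (m * n))
    (i : Fin m) (c : Fin n) :
    applyRot A (rowRot m n 0) (i, c) = if i = 0 then A (0, c - 1) else A (i, c) := by
  split_ifs with h <;> simp [applyRot, rowRot, h]

lemma Fin.one_le_val_iff [NeZero m] {i : Fin m} : 1 ≤ (i : ℕ) ↔ i ≠ 0 :=
  Nat.one_le_iff_ne_zero.trans Fin.val_ne_zero_iff

lemma Fin.eq_of_divNat_eq_of_modNat_eq {v w : Fin (m * n)} (hdiv : v.divNat = w.divNat)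
    (hmod : v.modNat = w.modNat) : v = w :=
  finProdFinEquiv.symm.injective (by simp only [finProdFinEquiv_symm_apply, hdiv, hmod])

@[simp]
lemma Fin.divNat_finProdFinEquiv (p : Fin m × Fin n) : (finProdFinEquiv p).divNat = p.1 := by
  simpa only [finProdFinEquiv_symm_apply] using
    congrArg Prod.fst (finProdFinEquiv.symm_apply_apply p)

@[simp]
lemma Fin.modNat_finProdFinEquiv (p : Fin m × Fin n) : (finProdFinEquiv p).modNat = p.2 := by
  simpa only [finProdFinEquiv_symm_apply] using
    congrArg Prod.snd (finProdFinEquiv.symm_apply_apply p)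

section Counting

variable [NeZero m] {A : (Fin m × Fin n) ≃ Fin (m * n)} {j : Fin n}

lemma nearFull_iff : NearFull A j ↔ ∀ i ≠ 0, (A (i, j)).modNat = j := by
  simp only [NearFull, Fin.one_le_val_iff, Fin.ext_iff, Fin.coe_modNat]

lemma NearFull.divNat_injective (h : NearFull A j) :
    Function.Injective fun i : {i : Fin m // i ≠ 0} => (A (i, j)).divNat := by
  intro i i' hii'
  have hA : A (i, j) = A (i', j) := Fin.eq_of_divNat_eq_of_modNat_eq hii'
    (by rw [nearFull_iff.mp h i i.2, nearFull_iff.mp h i' i'.2])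
  exact Subtype.ext (congrArg Prod.fst (A.injective hA))

def TopInBody (A : (Fin m × Fin n) ≃ Fin (m * n)) (j : Fin n) : Prop :=
  ∃ i ≠ 0, (A (i, j)).divNat = 0

def StrayAt (A : (Fin m × Fin n) ≃ Fin (m * n)) (c j : Fin n) : Prop :=
  (A (0, c)).modNat = j ∧ (A (0, c)).divNat ≠ 0

lemma exists_strayAt (hA : ∀ c, NearFull A c) (hj : TopInBody A j) : ∃ c, StrayAt A c j := by
  obtain ⟨k, hk⟩ : ∃ k, ∀ i : {i : Fin m // i ≠ 0}, (A (i, j)).divNat ≠ k := by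
    by_contra! hsurj
    have := Fintype.card_le_of_surjective _ hsurj
    have hcard : Fintype.card {i : Fin m // i ≠ 0} = m - 1 := by simp
    rw [Fintype.card_fin, hcard] at this
    have := NeZero.pos m
    omega
  have hk0 : k ≠ 0 := by
    rintro rfl
    obtain ⟨i, hi, hi0⟩ := hj
    exact hk ⟨i, hi⟩ hi0
  set p := A.symm (finProdFinEquiv (k, j))
  have hAp : A p = finProdFinEquiv (k, j) := A.apply_symm_apply _
  have hrow : p.1 = 0 := by
    by_contra hp1
    have hcol : j = p.2 := by simpa [hAp] using nearFull_iff.mp (hA p.2) p.1 hp1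
    exact hk ⟨p.1, hp1⟩ (by simp [hcol, hAp])
  have hA0 : A (0, p.2) = finProdFinEquiv (k, j) := by rw [← hAp, ← hrow]
  exact ⟨p.2, by simp [StrayAt, hA0, hk0]⟩

lemma bodyOfColumnIsFull_of_not_topInBody (h : NearFull A j) (hj : ¬ TopInBody A j) :
    BodyOfColumnIsFull A j := by
  have hrow : ∀ i : {i : Fin m // i ≠ 0}, (A (i, j)).divNat ≠ 0 := fun i hi => hj ⟨i, i.2, hi⟩
  let f : {i : Fin m // i ≠ 0} → {i : Fin m // i ≠ 0} := fun i => ⟨(A (i, j)).divNat, hrow i⟩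
  have hf : Function.Surjective f := Finite.injective_iff_surjective.mp fun i i' hii' =>
    h.divNat_injective (congrArg Subtype.val hii')
  intro v
  simp only [← Fin.coe_modNat, ← Fin.coe_divNat, ← Fin.ext_iff,
    Nat.one_le_iff_ne_zero, Fin.val_ne_zero_iff]
  constructor
  · rintro ⟨i, hi, rfl⟩
    exact ⟨nearFull_iff.mp h i hi, hrow ⟨i, hi⟩⟩
  · rintro ⟨hmod, hdiv⟩
    obtain ⟨i, hi⟩ := hf ⟨v.divNat, hdiv⟩
    refine ⟨i, i.2, Fin.eq_of_divNat_eq_of_modNat_eq (congrArg Subtype.val hi) ?_⟩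
    rw [nearFull_iff.mp h i i.2, hmod]

end Counting

section Moves

variable [NeZero m] {A B : (Fin m × Fin n) ≃ Fin (m * n)}

noncomputable def topInBodyCount (A : (Fin m × Fin n) ≃ Fin (m * n)) : ℕ :=
  {j | TopInBody A j}.ncard

lemma topInBodyCount_le : topInBodyCount A ≤ n :=
  (Set.ncard_le_card _).trans_eq (Nat.card_eq_fintype_card.trans (Fintype.card_fin n))

section ColumnShift

variable {j : Fin n} {i₀ : Fin m}
  (hB : ∀ i c, B (i, c) = if c = j then A (i + i₀, j) else A (i, c))
include hB

lemma topInBody_iff_of_columnShift {c : Fin n} (hc : c ≠ j) :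
    TopInBody B c ↔ TopInBody A c := by
  simp only [TopInBody, hB, if_neg hc]

lemma nearFull_of_columnShift (hA : ∀ c, NearFull A c) (hs : StrayAt A j j) (c : Fin n) :
    NearFull B c := by
  rw [nearFull_iff]
  intro i hi
  rw [hB]
  split_ifs with hc
  · subst hc
    by_cases h0 : i + i₀ = 0
    · rw [h0]; exact hs.1
    · exact nearFull_iff.mp (hA c) _ h0
  · exact nearFull_iff.mp (hA c) i hi

lemma not_topInBody_of_columnShift (hA : NearFull A j) (hi₀ : i₀ ≠ 0)
    (htop : (A (i₀, j)).divNat = 0) (hs : StrayAt A j j) : ¬ TopInBody B j := by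
  rintro ⟨i, hi, hdiv⟩
  rw [hB, if_pos rfl] at hdiv
  by_cases h0 : i + i₀ = 0
  · exact hs.2 (by rwa [h0] at hdiv)
  · have := hA.divNat_injective (a₁ := ⟨_, h0⟩) (a₂ := ⟨_, hi₀⟩) (hdiv.trans htop.symm)
    exact hi (by simpa using congrArg Subtype.val this)

lemma topInBodyCount_lt_of_columnShift (hA : NearFull A j) (hi₀ : i₀ ≠ 0)
    (htop : (A (i₀, j)).divNat = 0) (hs : StrayAt A j j) :
    topInBodyCount B < topInBodyCount A := by
  have hBj := not_topInBody_of_columnShift hB hA hi₀ htop hs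
  refine Set.ncard_lt_ncard ⟨fun c hc => ?_, fun hsub => hBj (hsub ⟨i₀, hi₀, htop⟩)⟩
  have hcj : c ≠ j := by rintro rfl; exact hBj hc
  exact (topInBody_iff_of_columnShift hB hcj).mp hc

end ColumnShift

variable [NeZero n]

def StrayWithin (A : (Fin m × Fin n) ≃ Fin (m * n)) (r : ℕ) : Prop :=
  ∀ j, TopInBody A j → ∃ d < r, StrayAt A (j - d) j

lemma not_topInBody_of_strayWithin_zero (h : StrayWithin A 0) (j : Fin n) : ¬ TopInBody A j :=
  fun hj => by simpa using h j hj

lemma strayWithin_self (hA : ∀ c, NearFull A c) : StrayWithin A n := by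
  intro j hj
  obtain ⟨c, hc⟩ := exists_strayAt hA hj
  exact ⟨(j - c : Fin n), (j - c).is_lt, by rwa [Fin.cast_val_eq_self, sub_sub_cancel]⟩

lemma strayWithin_of_columnShift {j : Fin n} {i₀ : Fin m}
    (hB : ∀ i c, B (i, c) = if c = j then A (i + i₀, j) else A (i, c)) (hA : NearFull A j)
    (hi₀ : i₀ ≠ 0) (htop : (A (i₀, j)).divNat = 0) (hs : StrayAt A j j) {r : ℕ}
    (hr : StrayWithin A r) : StrayWithin B r := by
  intro c hc
  have hcj : c ≠ j := by
    rintro rfl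
    exact not_topInBody_of_columnShift hB hA hi₀ htop hs hc
  obtain ⟨d, hd, hsd⟩ := hr c ((topInBody_iff_of_columnShift hB hcj).mp hc)
  have hdj : c - d ≠ j := by
    intro h
    rw [h] at hsd
    exact hcj (hsd.1.symm.trans hs.1)
  exact ⟨d, hd, by simpa only [StrayAt, hB, if_neg hdj] using hsd⟩

section RowShift

variable (hB : ∀ i c, B (i, c) = if i = 0 then A (0, c - 1) else A (i, c))
include hB

lemma topInBody_iff_of_rowShift {c : Fin n} : TopInBody B c ↔ TopInBody A c :=
  exists_congr fun i => and_congr_right fun hi => by rw [hB, if_neg hi]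

lemma nearFull_of_rowShift {c : Fin n} (hA : NearFull A c) : NearFull B c := by
  rw [nearFull_iff] at hA ⊢
  intro i hi
  rw [hB, if_neg hi]
  exact hA i hi

lemma topInBodyCount_eq_of_rowShift : topInBodyCount B = topInBodyCount A := by
  simp only [topInBodyCount, topInBody_iff_of_rowShift hB]

lemma strayWithin_of_rowShift {r : ℕ} (hr : StrayWithin A (r + 1))
    (hnot : ∀ j, TopInBody A j → ¬ StrayAt A j j) : StrayWithin B r := by
  intro j hj
  rw [topInBody_iff_of_rowShift hB] at hj
  obtain ⟨d, hd, hsd⟩ := hr j hj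
  obtain ⟨d, rfl⟩ : ∃ d', d = d' + 1 := by
    refine Nat.exists_eq_add_one.mpr (Nat.pos_of_ne_zero ?_)
    rintro rfl
    exact hnot j hj (by simpa using hsd)
  refine ⟨d, by omega, ?_⟩
  simpa only [StrayAt, hB, ↓reduceIte, Nat.cast_succ, sub_sub] using hsd

end RowShift

end Moves

theorem exists_seq_clearing_topInBody [NeZero m] [NeZero n]
    (A : (Fin m × Fin n) ≃ Fin (m * n)) (hA : ∀ c, NearFull A c) (r : ℕ) (hr : StrayWithin A r) :
    ∃ L : List (Equiv.Perm (Fin m × Fin n)), (∀ g ∈ L, g ∈ unitRotations m n) ∧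
      L.length ≤ r + m * topInBodyCount A ∧
      (∀ c, NearFull (applySeq A L) c) ∧ ∀ c, ¬ TopInBody (applySeq A L) c := by
  by_cases hfix : ∃ j, TopInBody A j ∧ StrayAt A j j
  · obtain ⟨j, ⟨i₀, hi₀, htop⟩, hs⟩ := hfix
    have hB := applySeq_colRot_shift A j i₀
    have hlt := topInBodyCount_lt_of_columnShift hB (hA j) hi₀ htop hs
    obtain ⟨L, hLrot, hLlen, hLend⟩ := exists_seq_clearing_topInBody _
      (nearFull_of_columnShift hB hA hs) r (strayWithin_of_columnShift hB (hA j) hi₀ htop hs hr)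
    refine ⟨List.replicate (m - i₀) (colRot m n j) ++ L, ?_, ?_, by rwa [applySeq_append]⟩
    · simp only [List.mem_append, List.mem_replicate]
      rintro g (⟨-, rfl⟩ | hg)
      exacts [Or.inr ⟨j, rfl⟩, hLrot g hg]
    · have := Nat.mul_le_mul_left m hlt
      rw [Nat.mul_succ] at this
      rw [List.length_append, List.length_replicate]
      omega
  · simp only [not_exists, not_and] at hfix
    cases r with
    | zero => exact ⟨[], by simp, by simp, hA, not_topInBody_of_strayWithin_zero hr⟩
    | succ r =>
      have hB := applyRot_rowRot_zero_apply A
      obtain ⟨L, hLrot, hLlen, hLend⟩ := exists_seq_clearing_topInBody _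
        (fun c => nearFull_of_rowShift hB (hA c)) r (strayWithin_of_rowShift hB hr hfix)
      refine ⟨rowRot m n 0 :: L, ?_, ?_, hLend⟩
      · rintro g (_ | ⟨_, hg⟩)
        exacts [Or.inl ⟨0, rfl⟩, hLrot g hg]
      · rw [topInBodyCount_eq_of_rowShift hB] at hLlen
        simp only [List.length_cons]
        omega
termination_by (r, topInBodyCount A)

theorem floatMinimums_bound :
    ∃ C : ℕ, 0 < C ∧ ∀ m n : ℕ, 2 ≤ m → 2 ≤ n →
      ∀ A : (Fin m × Fin n) ≃ Fin (m * n),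
        (∀ j : Fin n, NearFull A j) →
        ∃ L : List (Equiv.Perm (Fin m × Fin n)),
          (∀ g ∈ L, g ∈ unitRotations m n) ∧
          L.length ≤ C * m * n ∧
          ∀ j : Fin n, BodyFull (applySeq A L) j := by
  refine ⟨2, two_pos, fun m n hm hn A hA => ?_⟩
  have : NeZero m := ⟨by omega⟩
  have : NeZero n := ⟨by omega⟩
  obtain ⟨L, hLrot, hLlen, hLnf, hLtop⟩ :=
    exists_seq_clearing_topInBody A hA n (strayWithin_self hA)
  refine ⟨L, hLrot, ?_, fun j => ⟨hLnf j, bodyOfColumnIsFull_of_not_topInBody (hLnf j) (hLtop j)⟩⟩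
  calc L.length ≤ n + m * n := hLlen.trans (by gcongr; exact topInBodyCount_le)
    _ ≤ 2 * m * n := by nlinarith
end
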